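/- arXiv:1206.4398 — 9 statements merged into one kernel-verified Lean document; each statement's English description precedes it below -/
import Mathlib

section
/- For every element a of a finite group Γ and every set S in the Boolean algebra B(Γ) generated by the subgroups of Γ, either Atom(a) ⊆ S or Atom(a) ⊆ Γ \ S, where Atom(a) is the set of generators of the cyclic subgroup ⟨a⟩. -/
open Pointwise

/-- The Boolean algebra of subsets of `Γ` generated by the subgroups of `Γ`. -/
inductive InB (Γ : Type*) [AddGroup Γ] : Set Γ → Prop
  | subgroup (H : AddSubgroup Γ) : InB Γ (H : Set Γ)
  | compl {S : Set Γ} : InB Γ S → InB Γ Sᶜ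
  | union {S T : Set Γ} : InB Γ S → InB Γ T → InB Γ (S ∪ T)

/-- `Atom a` is the set of elements generating the same cyclic subgroup as `a`. -/
def Atom {Γ : Type*} [AddGroup Γ] (a : Γ) : Set Γ :=
  {b | AddSubgroup.zmultiples a = AddSubgroup.zmultiples b}

theorem atom_subset_or_subset_compl {Γ : Type*} [AddGroup Γ] [Fintype Γ]
    (a : Γ) (S : Set Γ) (hS : InB Γ S) :
    Atom a ⊆ S ∨ Atom a ⊆ Sᶜ := by
  induction hS with
  | subgroup H =>
    by_cases ha : a ∈ H
    · left
      intro b hb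
      have : AddSubgroup.zmultiples b ≤ H := by
        rw [← hb]
        exact (AddSubgroup.zmultiples_le).2 ha
      exact this (AddSubgroup.mem_zmultiples b)
    · right
      intro b hb hbH
      exact ha (by
        have : AddSubgroup.zmultiples a ≤ H := by
          rw [hb]
          exact (AddSubgroup.zmultiples_le).2 hbH
        exact this (AddSubgroup.mem_zmultiples a))
  | compl _ ih =>
    rcases ih with h | h
    · right; simpa using h
    · left; exact h
  | union _ _ ihS ihT =>
    rcases ihS with h | h
    · left; exact h.trans Set.subset_union_left
    · rcases ihT with h' | h'
      · left; exact h'.trans Set.subset_union_right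
      · right
        rw [Set.compl_union]
        exact Set.subset_inter h h'
end

section
/- For every a in a finite group Γ, Atom(a) equals the cyclic subgroup ⟨a⟩ with the union of all proper subgroups of ⟨a⟩ removed; in particular Atom(a) belongs to B(Γ). -/
/-!
An element `b` lies in `⟨a⟩` iff `⟨b⟩ ≤ ⟨a⟩`, and avoids every proper subgroup of `⟨a⟩` iff
`⟨b⟩` is not itself one of them; together these say `⟨b⟩ = ⟨a⟩`. A finite group has only finitely
many subgroups, so the union removed from `⟨a⟩` is a finite union of generators of `B(Γ)`.
-/

open Pointwise

namespace InB

variable {Γ : Type*} [AddGroup Γ]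

lemma empty : InB Γ ∅ := by
  simpa using (subgroup (⊤ : AddSubgroup Γ)).compl

lemma inter {S T : Set Γ} (hS : InB Γ S) (hT : InB Γ T) : InB Γ (S ∩ T) := by
  simpa [Set.compl_union] using (hS.compl.union hT.compl).compl

lemma diff {S T : Set Γ} (hS : InB Γ S) (hT : InB Γ T) : InB Γ (S \ T) :=
  hS.inter hT.compl

lemma biUnion {ι : Type*} {s : Set ι} (hs : s.Finite) {f : ι → Set Γ}
    (hf : ∀ i ∈ s, InB Γ (f i)) : InB Γ (⋃ i ∈ s, f i) := by
  induction s, hs using Set.Finite.induction_on with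
  | empty => simpa using empty
  | @insert i s _ _ ih =>
    rw [Set.biUnion_insert]
    exact (hf i (Set.mem_insert i s)).union
      (ih fun j hj => hf j (Set.mem_insert_of_mem i hj))

end InB

lemma mem_atom_iff {Γ : Type*} [AddGroup Γ] {a b : Γ} :
    b ∈ Atom a ↔ AddSubgroup.zmultiples b = AddSubgroup.zmultiples a :=
  eq_comm

lemma atom_eq_zmultiples_diff_iUnion_lt {Γ : Type*} [AddGroup Γ] (a : Γ) :
    Atom a = (AddSubgroup.zmultiples a : Set Γ) \
      ⋃ (H : AddSubgroup Γ) (_ : H < AddSubgroup.zmultiples a), (H : Set Γ) := by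
  ext b
  have not_mem_iUnion_iff : b ∉ ⋃ (H : AddSubgroup Γ) (_ : H < AddSubgroup.zmultiples a),
      (H : Set Γ) ↔ ¬ AddSubgroup.zmultiples b < AddSubgroup.zmultiples a := by
    simp only [Set.mem_iUnion, SetLike.mem_coe, not_exists]
    refine ⟨fun h hlt => h _ hlt (AddSubgroup.mem_zmultiples b),
      fun h H hH hb => h ((AddSubgroup.zmultiples_le.2 hb).trans_lt hH)⟩
  rw [mem_atom_iff, Set.mem_sdiff, not_mem_iUnion_iff, SetLike.mem_coe,
    ← AddSubgroup.zmultiples_le]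
  exact eq_iff_le_not_lt

theorem atom_eq_zmultiples_sdiff_properSubgroups {Γ : Type*} [AddGroup Γ] [Fintype Γ] (a : Γ) :
    (Atom a = (AddSubgroup.zmultiples a : Set Γ) \
      ⋃ (H : AddSubgroup Γ) (_ : H < AddSubgroup.zmultiples a), (H : Set Γ)) ∧
    InB Γ (Atom a) := by
  refine ⟨atom_eq_zmultiples_diff_iUnion_lt a, ?_⟩
  rw [atom_eq_zmultiples_diff_iUnion_lt a]
  have hproper : InB Γ (⋃ (H : AddSubgroup Γ) (_ : H < AddSubgroup.zmultiples a), (H : Set Γ)) :=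
    InB.biUnion (s := {H | H < AddSubgroup.zmultiples a}) (Set.toFinite _)
      fun H _ => InB.subgroup H
  exact (InB.subgroup _).diff hproper
end

section
/- For a finite group Γ, no nonempty proper subset of Atom(a) belongs to B(Γ), i.e., the sets Atom(a) are the atoms of the Boolean algebra B(Γ). -/
open Pointwise

theorem no_proper_nonempty_subset_of_atom_in_B {Γ : Type*} [AddGroup Γ] [Fintype Γ]
    (a : Γ) (T : Set Γ) (hT : T ⊂ Atom a) (hne : T.Nonempty) :
    ¬ InB Γ T := by
  have sat : ∀ S : Set Γ, InB Γ S → ∀ b c : Γ,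
      AddSubgroup.zmultiples b = AddSubgroup.zmultiples c → b ∈ S → c ∈ S := by
    intro S hS
    induction hS with
    | subgroup H =>
      intro b c h hb
      have : AddSubgroup.zmultiples c ≤ H := by
        rw [← h, AddSubgroup.zmultiples_le]; exact hb
      exact this (AddSubgroup.mem_zmultiples c)
    | compl _ ih =>
      intro b c h hb hc
      exact hb (ih c b h.symm hc)
    | union _ _ ih1 ih2 =>
      intro b c h hb
      rcases hb with hb | hb
      · exact Or.inl (ih1 b c h hb)
      · exact Or.inr (ih2 b c h hb)
  intro hTB
  obtain ⟨b, hb⟩ := hne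
  obtain ⟨hsub, hne'⟩ := hT
  obtain ⟨c, hcA, hcT⟩ := Set.exists_of_ssubset ⟨hsub, hne'⟩
  have hbA : b ∈ Atom a := hsub hb
  have h : AddSubgroup.zmultiples b = AddSubgroup.zmultiples c :=
    hbA.symm.trans hcA
  exact hcT (sat T hTB b c h hb)
end

section
/- Every nonempty set S in B(Γ) is a union of atoms, i.e., S = ⋃_{a ∈ S} Atom(a). -/
open Pointwise

lemma atom_subset {Γ : Type*} [AddGroup Γ] {S : Set Γ} (hS : InB Γ S) :
    ∀ a ∈ S, Atom a ⊆ S := by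
  induction hS with
  | subgroup H =>
    intro a ha b hb
    have : (AddSubgroup.zmultiples b : Set Γ) ⊆ H := by
      rw [← hb]
      exact (AddSubgroup.zmultiples_le.mpr ha)
    exact this (AddSubgroup.mem_zmultiples b)
  | compl h ih =>
    intro a ha b hb hbS
    exact ha (ih b hbS hb.symm)
  | union h1 h2 ih1 ih2 =>
    intro a ha b hb
    rcases ha with h | h
    · exact Or.inl (ih1 a h hb)
    · exact Or.inr (ih2 a h hb)

theorem mem_B_eq_iUnion_atoms {Γ : Type*} [AddGroup Γ] [Fintype Γ]
    (S : Set Γ) (hS : InB Γ S) (hne : S.Nonempty) :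
    S = ⋃ a ∈ S, Atom a := by
  apply Set.Subset.antisymm
  · intro a ha
    exact Set.mem_biUnion ha rfl
  · intro b hb
    rcases Set.mem_iUnion₂.mp hb with ⟨a, ha, hba⟩
    exact atom_subset hS a ha hba
end

section
/- If Γ is a finite abelian group and a, b ∈ Γ, then the sumset Atom(a) + Atom(b) = { s + t : s ∈ Atom(a), t ∈ Atom(b) } belongs to B(Γ). -/
open Pointwise

/-!
If `m` is coprime to `|Γ|`, then `x ↦ m • x` maps every atom into itself and is additive, so
`Atom a + Atom b` is a union of atoms. Conversely every element of `Atom u` is `m • u` for such an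
`m`: it is `k • u` with `k` coprime to the order of `u`, and `k` lifts modulo that order to a unit
modulo `|Γ|`. Each atom lies in `B(Γ)`, being `⟨x⟩` minus the finitely many proper subgroups
`⟨y⟩ < ⟨x⟩`, and so does any finite union of atoms.
-/

namespace InB

variable {Γ : Type*} [AddGroup Γ]

lemma sUnion [Finite Γ] {𝒮 : Set (Set Γ)} (h : ∀ S ∈ 𝒮, InB Γ S) : InB Γ (⋃₀ 𝒮) := by
  induction 𝒮, Set.toFinite 𝒮 using Set.Finite.induction_on with
  | empty => simpa using empty
  | insert _ _ ih =>
    rw [Set.sUnion_insert]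
    exact (h _ (Set.mem_insert _ _)).union (ih fun S hS => h S (Set.mem_insert_of_mem _ hS))

lemma iUnion [Finite Γ] {ι : Sort*} {f : ι → Set Γ} (h : ∀ i, InB Γ (f i)) :
    InB Γ (⋃ i, f i) := by
  rw [← Set.sUnion_range]
  exact sUnion (Set.forall_mem_range.2 h)

end InB

lemma Nat.exists_coprime_modEq {d N k : ℕ} [NeZero N] (hdN : d ∣ N) (hk : k.Coprime d) :
    ∃ m, m.Coprime N ∧ m ≡ k [MOD d] := by
  obtain ⟨w, hw⟩ := ZMod.unitsMap_surjective hdN (ZMod.unitOfCoprime k hk)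
  refine ⟨(w : ZMod N).val, ZMod.val_coe_unit_coprime w, ?_⟩
  rw [← ZMod.natCast_eq_natCast_iff, ZMod.natCast_val, ← ZMod.unitsMap_val hdN, hw]
  rfl

section Atom

variable {Γ : Type*} [AddGroup Γ]

lemma mem_atom_self (u : Γ) : u ∈ Atom u := rfl

lemma atom_eq_zmultiples_diff (x : Γ) :
    Atom x = (AddSubgroup.zmultiples x : Set Γ) \
      ⋃ (y : Γ) (_ : AddSubgroup.zmultiples y < AddSubgroup.zmultiples x),
        AddSubgroup.zmultiples y := by
  ext b
  simp only [Atom, Set.mem_ofPred_eq, Set.mem_sdiff, SetLike.mem_coe, Set.mem_iUnion, not_exists,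
    ← AddSubgroup.zmultiples_le]
  constructor
  · rintro hb
    exact ⟨hb.ge, fun y hyx hby => (hby.trans_lt hyx).ne hb.symm⟩
  · rintro ⟨hbx, hmax⟩
    exact (hbx.lt_or_eq.resolve_left fun hlt => hmax b hlt le_rfl).symm

lemma InB.atom [Finite Γ] (x : Γ) : InB Γ (Atom x) := by
  rw [atom_eq_zmultiples_diff]
  exact (InB.subgroup _).diff (InB.iUnion fun _ => InB.iUnion fun _ => InB.subgroup _)

lemma InB.of_atom_subset [Finite Γ] {S : Set Γ} (hS : ∀ u ∈ S, Atom u ⊆ S) : InB Γ S := by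
  have : S = ⋃ (u : Γ) (_ : u ∈ S), Atom u :=
    subset_antisymm (fun u hu => Set.mem_biUnion hu (mem_atom_self u)) (Set.iUnion₂_subset hS)
  rw [this]
  exact InB.iUnion fun u => InB.iUnion fun _ => InB.atom u

lemma nsmul_mem_atom [Finite Γ] {m : ℕ} {x : Γ} (hm : (addOrderOf x).Coprime m) :
    m • x ∈ Atom x := by
  refine (AddSubgroup.eq_of_le_of_card_ge ?_ ?_).symm
  · exact AddSubgroup.zmultiples_le.2 (AddSubgroup.nsmul_mem_zmultiples x m)
  · rw [Nat.card_zmultiples, Nat.card_zmultiples, hm.addOrderOf_nsmul]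

lemma exists_coprime_nsmul_eq_of_mem_atom [Finite Γ] {u v : Γ} (h : v ∈ Atom u) :
    ∃ m : ℕ, m.Coprime (Nat.card Γ) ∧ m • u = v := by
  obtain ⟨k, rfl⟩ : ∃ k : ℕ, k • u = v :=
    mem_multiples_iff_mem_zmultiples.2 (h ▸ AddSubgroup.mem_zmultiples v)
  have hord : addOrderOf (k • u) = addOrderOf u := by
    rw [← Nat.card_zmultiples, ← h, Nat.card_zmultiples]
  have hk : k.Coprime (addOrderOf u) := by
    rw [(isOfFinAddOrder_of_finite u).addOrderOf_nsmul, Nat.div_eq_self] at hord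
    exact Nat.coprime_comm.1 (hord.resolve_left (addOrderOf_pos u).ne')
  have : NeZero (Nat.card Γ) := ⟨Nat.card_pos.ne'⟩
  obtain ⟨m, hm, hmk⟩ := Nat.exists_coprime_modEq (addOrderOf_dvd_natCard u) hk
  exact ⟨m, hm, nsmul_eq_nsmul_iff_modEq.2 hmk⟩

end Atom

lemma atom_subset_atom_add_atom {Γ : Type*} [AddCommGroup Γ] [Finite Γ] {a b u : Γ}
    (hu : u ∈ Atom a + Atom b) : Atom u ⊆ Atom a + Atom b := by
  obtain ⟨s, hs, t, ht, rfl⟩ := hu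
  intro v hv
  obtain ⟨m, hm, rfl⟩ := exists_coprime_nsmul_eq_of_mem_atom hv
  have hcop (x : Γ) : (addOrderOf x).Coprime m :=
    (hm.coprime_dvd_right (addOrderOf_dvd_natCard x)).symm
  rw [nsmul_add]
  exact Set.add_mem_add (hs.trans (nsmul_mem_atom (hcop s))) (ht.trans (nsmul_mem_atom (hcop t)))

theorem atom_add_atom_mem_B {Γ : Type*} [AddCommGroup Γ] [Fintype Γ] (a b : Γ) :
    InB Γ (Atom a + Atom b) :=
  InB.of_atom_subset fun _ => atom_subset_atom_add_atom
end

section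
/- For a finite abelian group Γ and any symmetric set S ∈ B(Γ), the Cayley graph Cay(Γ,S) is integral, i.e., all eigenvalues of its adjacency matrix are integers. -/
open Pointwise

namespace CayleyAux

open scoped Classical

variable {Γ : Type*} [AddCommGroup Γ] [Fintype Γ]

/-- Integer-valued indicator function of a set. -/
noncomputable def ind (T : Set Γ) : Γ → ℤ := fun x => if x ∈ T then 1 else 0

/-- Indicator functions of subgroups. -/
def gens (Γ : Type*) [AddCommGroup Γ] [Fintype Γ] : Set (Γ → ℤ) :=
  {f | ∃ H : AddSubgroup Γ, f = ind (H : Set Γ)}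

lemma gens_mul_subset : gens Γ * gens Γ ⊆ gens Γ := by
  rintro f hf
  rw [Set.mem_mul] at hf
  obtain ⟨g, hg, h, hh, rfl⟩ := hf
  obtain ⟨H, rfl⟩ := hg
  obtain ⟨K, rfl⟩ := hh
  refine ⟨H ⊓ K, ?_⟩
  funext x
  simp only [Pi.mul_apply, ind, AddSubgroup.coe_inf, Set.mem_inter_iff, SetLike.mem_coe]
  by_cases h1 : x ∈ H <;> by_cases h2 : x ∈ K <;> simp [h1, h2]

lemma inB_ind_mem (S : Set Γ) (hS : InB Γ S) :
    ind S ∈ Submodule.span ℤ (gens Γ) := by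
  induction hS with
  | subgroup H => exact Submodule.subset_span ⟨H, rfl⟩
  | @compl T _ ih =>
      have htop : ind (((⊤ : AddSubgroup Γ) : Set Γ)) ∈ Submodule.span ℤ (gens Γ) :=
        Submodule.subset_span ⟨⊤, rfl⟩
      have hEq : ind Tᶜ = ind (((⊤ : AddSubgroup Γ) : Set Γ)) - ind T := by
        funext x
        by_cases hx : x ∈ T <;> simp [ind, hx]
      rw [hEq]
      exact sub_mem htop ih
  | @union T U _ _ ihT ihU =>
      have hEq : ind (T ∪ U) = ind T + ind U - ind T * ind U := by
        funext x
        by_cases h1 : x ∈ T <;> by_cases h2 : x ∈ U <;> simp [ind, h1, h2]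
      rw [hEq]
      refine sub_mem (add_mem ihT ihU) ?_
      have hmul := Submodule.mul_mem_mul ihT ihU
      rw [Submodule.span_mul_span] at hmul
      exact Submodule.span_mono gens_mul_subset hmul

lemma sum_ind_int (χ : AddChar Γ ℂ) (f : Γ → ℤ) (hf : f ∈ Submodule.span ℤ (gens Γ)) :
    ∃ k : ℤ, ∑ x, (f x : ℂ) * χ x = (k : ℂ) := by
  induction hf using Submodule.span_induction with
  | mem f hf =>
      obtain ⟨H, rfl⟩ := hf
      have h1 : ∑ x, ((ind (H : Set Γ) x : ℂ) * χ x) = ∑ x, (if x ∈ H then χ x else 0) := by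
        refine Finset.sum_congr rfl fun x _ => ?_
        by_cases hx : x ∈ H <;> simp [ind, hx]
      have h2 : ∑ x, (if x ∈ H then χ x else 0)
          = ∑ x : {x // x ∈ H}, χ (x : Γ) := by
        rw [← Finset.sum_filter]
        exact Finset.sum_subtype _ (by simp) _
      set ψ : AddChar H ℂ := χ.compAddMonoidHom H.subtype with hψ
      have h3 : ∑ x : {x // x ∈ H}, χ (x : Γ) = ∑ x, ψ x := rfl
      refine ⟨if ψ = 0 then (Fintype.card H : ℤ) else 0, ?_⟩
      rw [h1, h2, h3, AddChar.sum_eq_ite]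
      split_ifs <;> simp
  | zero => exact ⟨0, by simp⟩
  | add f g hfm hgm hf hg =>
      obtain ⟨k, hk⟩ := hf
      obtain ⟨l, hl⟩ := hg
      refine ⟨k + l, ?_⟩
      push_cast
      rw [← hk, ← hl, ← Finset.sum_add_distrib]
      refine Finset.sum_congr rfl fun x _ => ?_
      simp only [Pi.add_apply]
      push_cast
      ring
  | smul z f hfm hf =>
      obtain ⟨k, hk⟩ := hf
      refine ⟨z * k, ?_⟩
      push_cast
      rw [← hk, Finset.mul_sum]
      refine Finset.sum_congr rfl fun x _ => ?_
      simp only [Pi.smul_apply, smul_eq_mul]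
      push_cast
      ring

lemma sum_char_int (S : Set Γ) (hS : InB Γ S) (χ : AddChar Γ ℂ) :
    ∃ k : ℤ, (∑ x, if x ∈ S then χ x else 0) = (k : ℂ) := by
  obtain ⟨k, hk⟩ := sum_ind_int χ (ind S) (inB_ind_mem S hS)
  refine ⟨k, ?_⟩
  rw [← hk]
  refine Finset.sum_congr rfl fun x _ => ?_
  by_cases hx : x ∈ S <;> simp [ind, hx]

end CayleyAux

open Matrix

open scoped Classical in
theorem cayley_integral_of_mem_B {Γ : Type*} [AddCommGroup Γ] [Fintype Γ]
    (S : Set Γ) (hsym : -S = S) (hS : InB Γ S) :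
    ∀ μ ∈ spectrum ℂ (Matrix.of fun a b : Γ => if a - b ∈ S then (1 : ℂ) else 0),
      ∃ k : ℤ, μ = (k : ℂ) := by
  intro μ hμ
  set M : Matrix Γ Γ ℂ := Matrix.of fun a b : Γ => if a - b ∈ S then (1 : ℂ) else 0 with hMdef
  have hsym' : ∀ x : Γ, -x ∈ S ↔ x ∈ S := by
    intro x
    conv_rhs => rw [← hsym]
    rw [Set.mem_neg]
  set d : AddChar Γ ℂ → ℂ := fun χ => ∑ x, if x ∈ S then χ x else 0 with hd
  set cb := AddChar.complexBasis Γ with hcb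
  -- each character is an eigenvector of M
  have hmulvec : ∀ χ : AddChar Γ ℂ, M *ᵥ ⇑χ = d χ • ⇑χ := by
    intro χ
    funext a
    have step1 : (M *ᵥ ⇑χ) a = ∑ x, (if a - x ∈ S then (1 : ℂ) else 0) * χ x := rfl
    have step2 : ∑ x, (if a - x ∈ S then (1 : ℂ) else 0) * χ x
        = ∑ s, (if s ∈ S then χ a * χ (-s) else 0) := by
      refine Fintype.sum_equiv (Equiv.subLeft a) _ _ fun s => ?_
      simp only [Equiv.subLeft_apply, sub_sub_cancel, neg_sub]
      by_cases h : a - s ∈ S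
      · have hadd : a + (s - a) = s := by abel
        simp only [h, if_true, one_mul, ← AddChar.map_add_eq_mul, hadd]
      · simp [h]
    have step3 : ∑ s, (if s ∈ S then χ a * χ (-s) else 0)
        = χ a * ∑ s, (if s ∈ S then χ (-s) else 0) := by
      rw [Finset.mul_sum]
      refine Finset.sum_congr rfl fun s _ => ?_
      by_cases hs : s ∈ S <;> simp [hs]
    have step4 : ∑ s, (if s ∈ S then χ (-s) else 0) = d χ := by
      refine Fintype.sum_equiv (Equiv.neg Γ) _ _ fun s => ?_
      simp only [Equiv.neg_apply, neg_neg, hsym' s]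
    rw [step1, step2, step3, step4, Pi.smul_apply, smul_eq_mul, mul_comm]
  -- M acts diagonally in the character basis
  have hdiag : Matrix.toLin' M = Matrix.toLin cb cb (Matrix.diagonal d) := by
    refine cb.ext fun χ => ?_
    have h1 : Matrix.toLin cb cb (Matrix.diagonal d) (cb χ) = d χ • cb χ :=
      (hasEigenvector_toLin_diagonal d χ cb).apply_eq_smul
    have h2 : (cb χ : Γ → ℂ) = ⇑χ := by rw [hcb, AddChar.complexBasis_apply]
    rw [h1, Matrix.toLin'_apply]
    rw [show ((cb χ : Γ → ℂ)) = ⇑χ from h2]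
    exact hmulvec χ
  -- transfer spectrum
  have hspec : μ ∈ spectrum ℂ (Matrix.toLin' M) := by
    have hEq : (Matrix.toLinAlgEquiv (Pi.basisFun ℂ Γ) M : Module.End ℂ (Γ → ℂ))
        = Matrix.toLin' M := by
      rw [← Matrix.toLin_eq_toLin']
      rfl
    rw [← hEq]
    rwa [AlgEquiv.spectrum_eq (Matrix.toLinAlgEquiv (Pi.basisFun ℂ Γ)) M]
  rw [hdiag] at hspec
  have heig : Module.End.HasEigenvalue (Matrix.toLin cb cb (Matrix.diagonal d)) μ :=
    Module.End.hasEigenvalue_iff_mem_spectrum.mpr hspec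
  obtain ⟨χ, hχ⟩ := (hasEigenvalue_toLin_diagonal_iff d cb).mp heig
  obtain ⟨k, hk⟩ := CayleyAux.sum_char_int S hS χ
  exact ⟨k, by rw [← hχ, ← hk]⟩
end

section
/- Let Γ be a finite abelian group and S ⊆ Γ nonempty with S = −S. If the Cayley graph Cay(Γ,S) is integral (all adjacency eigenvalues are integers), then for every a ∈ Γ either Atom(a) ⊆ S or Atom(a) ∩ S = ∅. -/
open Pointwise

/-!
For a character `ψ`, the function `b ↦ ψ (-b)` is an eigenvector of the adjacency matrix with
eigenvalue `∑ s ∈ S, ψ s`, so integrality makes every character sum of `S` rational. The values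
of `ψ` are `|Γ|`-th roots of unity, and a rational polynomial expression in a primitive root `ζ`
keeps its value when `ζ` is replaced by `ζ ^ m` with `m` coprime to `|Γ|`, since both have the
cyclotomic polynomial as minimal polynomial. Hence `S` and `m • S` have the same character sums
and coincide by Fourier inversion. Two generators of the same cyclic subgroup differ by such a
factor `m`: by Dirichlet's theorem it can be taken to be a prime larger than `|Γ|`.
-/

open Polynomial in
theorem IsPrimitiveRoot.aeval_pow_eq_zero {K : Type*} [Field K] [CharZero K] {ζ : K} {n m : ℕ}
    (hζ : IsPrimitiveRoot ζ n) (hm : m.Coprime n) {P : ℚ[X]} (hP : aeval ζ P = 0) :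
    aeval (ζ ^ m) P = 0 := by
  rcases n.eq_zero_or_pos with rfl | hn
  · rwa [(Nat.coprime_zero_right m).mp hm, pow_one]
  rw [← minpoly.dvd_iff] at hP ⊢
  rwa [← cyclotomic_eq_minpoly_rat (hζ.pow_of_coprime m hm) hn, cyclotomic_eq_minpoly_rat hζ hn]

open Polynomial in
theorem IsPrimitiveRoot.sum_pow_eq_of_sum_eq_ratCast {K ι : Type*} [Field K] [CharZero K]
    {ζ : K} {n m : ℕ} [NeZero n] (hζ : IsPrimitiveRoot ζ n) (hm : m.Coprime n) {s : Finset ι}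
    {z : ι → K} (hz : ∀ i, z i ^ n = 1) {q : ℚ} (hq : ∑ i ∈ s, z i = q) :
    ∑ i ∈ s, z i ^ m = q := by
  choose e _ he using fun i => hζ.eq_pow_of_pow_eq_one (hz i)
  have hP : aeval ζ (∑ i ∈ s, X ^ e i - C q) = 0 := by simp [he, hq]
  have hconj := hζ.aeval_pow_eq_zero hm hP
  simp only [map_sub, map_sum, map_pow, aeval_X, aeval_C, eq_ratCast, sub_eq_zero] at hconj
  rw [← hconj]
  exact Finset.sum_congr rfl fun i _ => by rw [← he, ← pow_mul, ← pow_mul, mul_comm]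

theorem sum_mul_addChar_mem_spectrum {Γ R : Type*} [AddCommGroup Γ] [Fintype Γ] [DecidableEq Γ]
    [CommRing R] [Nontrivial R] (f : Γ → R) (ψ : AddChar Γ R) :
    ∑ x, f x * ψ x ∈ spectrum R (Matrix.of fun a b => f (a - b)) := by
  rw [← Matrix.spectrum_toLin']
  refine (Module.End.hasEigenvalue_of_hasEigenvector (x := fun b => ψ (-b)) ⟨?_, ?_⟩).mem_spectrum
  · rw [Module.End.mem_eigenspace_iff]
    ext a
    simp only [Matrix.toLin'_apply, Matrix.mulVec, dotProduct, Matrix.of_apply, Pi.smul_apply,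
      smul_eq_mul, Finset.sum_mul]
    refine Fintype.sum_equiv (Equiv.subLeft a) _ _ fun b => ?_
    rw [Equiv.subLeft_apply, mul_assoc, ← AddChar.map_add_eq_mul]
    congr 2
    abel
  · exact fun h => by simpa using congrFun h 0

theorem AddChar.sum_mul_sum_eq_ite {α : Type*} [AddCommGroup α] [Fintype α] [DecidableEq α]
    (S : Finset α) (y : α) :
    ∑ ψ : AddChar α ℂ, ψ (-y) * ∑ s ∈ S, ψ s = if y ∈ S then (Fintype.card α : ℂ) else 0 := by
  simp_rw [Finset.mul_sum, ← AddChar.map_add_eq_mul]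
  rw [Finset.sum_comm]
  simp [AddChar.sum_apply_eq_ite, neg_add_eq_zero]

theorem AddChar.finset_eq_of_forall_sum_eq {α : Type*} [AddCommGroup α] [Fintype α]
    [DecidableEq α] {S T : Finset α}
    (h : ∀ ψ : AddChar α ℂ, ∑ s ∈ S, ψ s = ∑ t ∈ T, ψ t) : S = T := by
  ext y
  have hy := AddChar.sum_mul_sum_eq_ite S y
  simp_rw [h, AddChar.sum_mul_sum_eq_ite] at hy
  have hcard : (0 : ℂ) ≠ Fintype.card α := (Nat.cast_ne_zero.2 Fintype.card_ne_zero).symm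
  split_ifs at hy <;> simp_all

theorem exists_coprime_addOrderOf_nsmul_eq {G : Type*} [AddGroup G] [Finite G] {b c : G}
    (h : AddSubgroup.zmultiples b = AddSubgroup.zmultiples c) :
    ∃ u : ℕ, u.Coprime (addOrderOf b) ∧ u • b = c := by
  obtain ⟨u, rfl⟩ : ∃ u : ℕ, u • b = c := by
    rw [← AddSubmonoid.mem_multiples_iff, mem_multiples_iff_mem_zmultiples, h]
    exact AddSubgroup.mem_zmultiples c
  refine ⟨u, ?_, rfl⟩
  have hord : addOrderOf (u • b) = addOrderOf b := by
    rw [← Nat.card_zmultiples, ← h, Nat.card_zmultiples]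
  rw [(isOfFinAddOrder_of_finite b).addOrderOf_nsmul, Nat.div_eq_self] at hord
  exact Nat.coprime_comm.1 (hord.resolve_left (addOrderOf_pos b).ne')

theorem exists_coprime_card_nsmul_eq {G : Type*} [AddGroup G] [Finite G] {b c : G}
    (h : AddSubgroup.zmultiples b = AddSubgroup.zmultiples c) :
    ∃ m : ℕ, (Nat.card G).Coprime m ∧ m • b = c := by
  obtain ⟨u, hu, rfl⟩ := exists_coprime_addOrderOf_nsmul_eq h
  obtain ⟨p, hpG, hp, hpu⟩ := Nat.forall_exists_prime_gt_and_modEq (Nat.card G)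
    (addOrderOf_pos b).ne' hu
  exact ⟨p, (hp.coprime_iff_not_dvd.2 (Nat.not_dvd_of_pos_of_lt Nat.card_pos hpG)).symm,
    nsmul_eq_nsmul_iff_modEq.2 hpu⟩

theorem Finset.image_nsmul_eq_self_of_forall_sum_addChar_eq_ratCast {Γ : Type*} [AddCommGroup Γ]
    [Fintype Γ] [DecidableEq Γ] {S : Finset Γ} {m : ℕ} (hm : (Nat.card Γ).Coprime m)
    (hS : ∀ ψ : AddChar Γ ℂ, ∃ q : ℚ, ∑ s ∈ S, ψ s = q) :
    S.image (m • ·) = S := by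
  have hζ := Complex.isPrimitiveRoot_exp (Nat.card Γ) Nat.card_pos.ne'
  refine AddChar.finset_eq_of_forall_sum_eq fun ψ => ?_
  obtain ⟨q, hq⟩ := hS ψ
  have hψ : ∀ x, ψ x ^ Nat.card Γ = 1 := fun x => by
    rw [← AddChar.map_nsmul_eq_pow, card_nsmul_eq_zero', AddChar.map_zero_eq_one]
  rw [Finset.sum_image fun x _ y _ h => (Nat.Coprime.nsmul_right_bijective hm).1 h, hq]
  simp_rw [AddChar.map_nsmul_eq_pow]
  exact hζ.sum_pow_eq_of_sum_eq_ratCast hm.symm hψ hq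

open scoped Classical in
theorem atom_subset_or_disjoint_of_integral_general {Γ : Type*} [AddCommGroup Γ] [Fintype Γ]
    (S : Set Γ)
    (hint : ∀ μ ∈ spectrum ℂ (Matrix.of fun a b : Γ => if a - b ∈ S then (1 : ℂ) else 0),
      ∃ k : ℤ, μ = (k : ℂ)) :
    ∀ a : Γ, Atom a ⊆ S ∨ Atom a ∩ S = ∅ := by
  intro a
  refine or_iff_not_imp_right.2 fun hdisj c hc => ?_
  obtain ⟨b, hb, hbS⟩ := Set.nonempty_iff_ne_empty.2 hdisj
  obtain ⟨m, hm, rfl⟩ := exists_coprime_card_nsmul_eq (hb.symm.trans hc)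
  have hrat : ∀ ψ : AddChar Γ ℂ, ∃ q : ℚ, ∑ s ∈ S.toFinset, ψ s = q := fun ψ => by
    obtain ⟨k, hk⟩ := hint _ (sum_mul_addChar_mem_spectrum (fun x => if x ∈ S then 1 else 0) ψ)
    exact ⟨k, by simpa [Finset.sum_ite, Set.filter_mem_univ_eq_toFinset] using hk⟩
  have himage := Finset.image_nsmul_eq_self_of_forall_sum_addChar_eq_ratCast hm hrat
  rw [← Set.mem_toFinset, ← himage]
  exact Finset.mem_image_of_mem _ (Set.mem_toFinset.2 hbS)

open scoped Classical in
theorem atom_subset_or_disjoint_of_integral {Γ : Type*} [AddCommGroup Γ] [Fintype Γ]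
    (S : Set Γ) (hne : S.Nonempty) (hsym : -S = S)
    (hint : ∀ μ ∈ spectrum ℂ (Matrix.of fun a b : Γ => if a - b ∈ S then (1 : ℂ) else 0),
      ∃ k : ℤ, μ = (k : ℂ)) :
    ∀ a : Γ, Atom a ⊆ S ∨ Atom a ∩ S = ∅ :=
  atom_subset_or_disjoint_of_integral_general S hint
end

section
/- If G = Cay(Γ,S) is an integral Cayley graph over a finite abelian group Γ and D is a set of nonnegative integers (possibly including ∞), then the distance power G^D (vertices x,y adjacent iff d(x,y) ∈ D) is again a Cayley graph Cay(Γ, S^{(D)}) over Γ for some symmetric set S^{(D)} ∈ B(Γ); in particular G^D is integral. -/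
open Pointwise

/-!
The eigenvalues of `Cay(Γ, S)` are the character sums `∑_{s ∈ S} ψ s`, sums of `|Γ|`-th roots of
unity. By the Galois theory of `ℚ(ζ_{|Γ|})` and Fourier inversion on `Γ`, they are all integers iff
`S` is stable under `x ↦ m • x` for every `m` coprime to `|Γ|`; such a set is a union of atoms,
hence lies in `B(Γ)`. Translations and these maps are automorphisms of `Cay(Γ, S)`, so the distance
from `x` to `y` depends only on `x - y` and is invariant under `m • ·`. Hence
`S^(D) = {g | d(g, 0) ∈ D}` is stable as well, and `G^D = Cay(Γ, S^(D))`.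
-/

lemma exists_intCast_eq_of_isIntegral_of_forall_fixed {K : Type*} [Field K] [NumberField K]
    [IsGalois ℚ K] {x : K} (hx : IsIntegral ℤ x) (hfix : ∀ σ : Gal(K/ℚ), σ x = x) :
    ∃ k : ℤ, x = k := by
  obtain ⟨q, rfl⟩ := (IsGalois.mem_range_algebraMap_iff_fixed x).mpr hfix
  obtain ⟨k, rfl⟩ := IsIntegrallyClosed.isIntegral_iff.mp
    ((isIntegral_algebraMap_iff (algebraMap ℚ K).injective).mp hx)
  exact ⟨k, by simp⟩

open IsCyclotomicExtension.Rat in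
theorem exists_intCast_eq_sum_iff_forall_sum_pow_eq {ι : Type*} {n : ℕ} [NeZero n]
    (t : Finset ι) {f : ι → ℂ} (hf : ∀ i, f i ^ n = 1) :
    (∃ k : ℤ, ∑ i ∈ t, f i = k) ↔ ∀ m : ℕ, m.Coprime n → ∑ i ∈ t, f i ^ m = ∑ i ∈ t, f i := by
  let K := CyclotomicField n ℚ
  have : IsCyclotomicExtension {n} ℚ K :=
    CyclotomicField.instIsCyclotomicExtensionSingletonNatSetOfCharZero n ℚ
  have : IsGalois ℚ K := IsCyclotomicExtension.isGalois {n} ℚ K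
  have hζ := IsCyclotomicExtension.zeta_spec n ℚ K
  let φ : K →ₐ[ℚ] ℂ := IsAlgClosed.lift
  have hφ : Function.Injective φ := φ.toRingHom.injective
  choose a _ ha using fun i => (hζ.map_of_injective hφ).eq_pow_of_pow_eq_one (hf i)
  let z := ∑ i ∈ t, IsCyclotomicExtension.zeta n ℚ K ^ a i
  have hφz : φ z = ∑ i ∈ t, f i := by simp [z, ha]
  have hσz (σ : Gal(K/ℚ)) : φ (σ z) = ∑ i ∈ t, f i ^ (galEquivZMod n K σ).val.val := by
    rw [map_sum, map_sum]
    refine Finset.sum_congr rfl fun i _ => ?_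
    rw [galEquivZMod_apply_of_pow_eq n K σ (by rw [pow_right_comm, hζ.pow_eq_one, one_pow]),
      map_pow, map_pow, ha]
  constructor
  · rintro ⟨k, hk⟩ m hm
    have hz : z = k := hφ (by rw [hφz, hk, map_intCast])
    have := hσz ((galEquivZMod n K).symm (ZMod.unitOfCoprime m hm))
    rw [hz, map_intCast, map_intCast, MulEquiv.apply_symm_apply] at this
    simpa [ZMod.unitOfCoprime, ← pow_eq_pow_mod m (hf _), hk] using this.symm
  · intro h
    have hz_int : IsIntegral ℤ z :=
      IsIntegral.sum _ fun i _ => (hζ.isIntegral (NeZero.pos n)).pow _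
    have hz_fix (σ : Gal(K/ℚ)) : σ z = z :=
      hφ (by rw [hσz, h _ (ZMod.val_coe_unit_coprime _), hφz])
    obtain ⟨k, hk⟩ := exists_intCast_eq_of_isIntegral_of_forall_fixed hz_int hz_fix
    exact ⟨k, by rw [← hφz, hk, map_intCast]⟩

def IsCoprimeSMulInvariant {Γ : Type*} [AddGroup Γ] (S : Set Γ) : Prop :=
  ∀ m : ℕ, m.Coprime (Nat.card Γ) → ∀ x, m • x ∈ S ↔ x ∈ S

lemma exists_coprime_nsmul_eq_of_zmultiples_eq {Γ : Type*} [AddGroup Γ] [Finite Γ] {a b : Γ}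
    (h : AddSubgroup.zmultiples a = AddSubgroup.zmultiples b) :
    ∃ m : ℕ, m.Coprime (Nat.card Γ) ∧ m • a = b := by
  have : NeZero (Nat.card Γ) := ⟨Nat.card_pos.ne'⟩
  obtain ⟨j, rfl⟩ := AddSubgroup.mem_zmultiples_iff.mp (h ▸ AddSubgroup.mem_zmultiples b)
  obtain ⟨l, hl⟩ := AddSubgroup.mem_zmultiples_iff.mp (h.symm ▸ AddSubgroup.mem_zmultiples a)
  have hunit : IsUnit (j : ZMod (addOrderOf a)) := by
    refine .of_mul_eq_one_right (l : ZMod (addOrderOf a)) ?_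
    rw [← Int.cast_mul, ← Int.cast_one, ZMod.intCast_eq_intCast_iff, ← zsmul_eq_zsmul_iff_modEq,
      mul_zsmul, hl, one_zsmul]
  have hdvd := addOrderOf_dvd_natCard a
  obtain ⟨v, hv⟩ := ZMod.unitsMap_surjective hdvd hunit.unit
  refine ⟨(v : ZMod (Nat.card Γ)).val, ZMod.val_coe_unit_coprime v, ?_⟩
  rw [← natCast_zsmul, zsmul_eq_zsmul_iff_modEq, ← ZMod.intCast_eq_intCast_iff, Int.cast_natCast,
    ZMod.natCast_val, ← ZMod.unitsMap_val hdvd, hv, IsUnit.unit_spec]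

namespace InB

variable {Γ : Type*} [AddGroup Γ]

lemma atom_s17 [Finite Γ] (a : Γ) : InB Γ (Atom a) := by
  have : Atom a = (AddSubgroup.zmultiples a : Set Γ) \
      ⋃₀ ((fun b => (AddSubgroup.zmultiples b : Set Γ)) ''
        {b | AddSubgroup.zmultiples b < AddSubgroup.zmultiples a}) := by
    ext x
    simp only [Atom, Set.mem_ofPred_eq, Set.mem_sdiff, SetLike.mem_coe, Set.sUnion_image,
      Set.mem_iUnion, exists_prop, not_exists, not_and, ← AddSubgroup.zmultiples_le]
    refine ⟨fun h => h ▸ ⟨le_rfl, fun b hb hab => (hab.trans_lt hb).false⟩, fun ⟨hle, hmin⟩ => ?_⟩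
    by_contra hne
    exact hmin x (lt_of_le_of_ne hle (Ne.symm hne)) le_rfl
  rw [this]
  exact (subgroup _).diff (sUnion (by simp [subgroup]))

end InB

namespace IsCoprimeSMulInvariant

variable {Γ : Type*} [AddGroup Γ] [Finite Γ] {S : Set Γ}

lemma inB (hS : IsCoprimeSMulInvariant S) : InB Γ S := by
  have : S = ⋃₀ (Atom '' S) := by
    ext x
    simp only [Set.sUnion_image, Set.mem_iUnion, exists_prop]
    refine ⟨fun hx => ⟨x, hx, rfl⟩, fun ⟨a, ha, hxa⟩ => ?_⟩
    obtain ⟨m, hm, rfl⟩ := exists_coprime_nsmul_eq_of_zmultiples_eq hxa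
    exact (hS m hm a).mpr ha
  rw [this]
  exact InB.sUnion (Set.forall_mem_image.mpr fun a _ => InB.atom_s17 a)

lemma neg_eq (hS : IsCoprimeSMulInvariant S) : -S = S := by
  have hcard : 1 ≤ Nat.card Γ := Nat.card_pos
  have hneg (x : Γ) : (Nat.card Γ - 1) • x = -x := eq_neg_of_add_eq_zero_left <| by
    rw [← succ_nsmul, Nat.sub_add_cancel hcard, card_nsmul_eq_zero']
  ext x
  rw [Set.mem_neg, ← hneg]
  exact hS _ ((Nat.coprime_self_sub_left hcard).mpr (Nat.coprime_one_left _)) x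

end IsCoprimeSMulInvariant

section Characters

open Matrix

variable {Γ : Type*} [AddCommGroup Γ] [Fintype Γ]

lemma AddChar.eq_zero_of_forall_dotProduct_eq_zero [DecidableEq Γ] {v : Γ → ℂ}
    (h : ∀ ψ : AddChar Γ ℂ, ⇑ψ ⬝ᵥ v = 0) : v = 0 := by
  refine (dotProductEquiv ℂ Γ).map_eq_zero_iff.mp ((AddChar.complexBasis Γ).ext fun ψ => ?_)
  simp [dotProduct_comm v, h]

lemma AddChar.finset_eq_of_forall_sum_eq_s17 {A B : Finset Γ}
    (h : ∀ ψ : AddChar Γ ℂ, ∑ s ∈ A, ψ s = ∑ s ∈ B, ψ s) : A = B := by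
  classical
  have key := AddChar.eq_zero_of_forall_dotProduct_eq_zero
    (v := fun x => (if x ∈ A then 1 else 0) - if x ∈ B then 1 else 0) fun ψ => by
      simp [dotProduct, mul_sub, Finset.sum_sub_distrib, h]
  ext x
  have := congrFun key x
  split_ifs at this <;> simp_all

open scoped Classical in
noncomputable def cayleyMatrix (S : Set Γ) : Matrix Γ Γ ℂ :=
  Matrix.of fun a b => if a - b ∈ S then 1 else 0

open scoped Classical in
lemma vecMul_cayleyMatrix (S : Set Γ) (ψ : AddChar Γ ℂ) :
    ⇑ψ ᵥ* cayleyMatrix S = (∑ s ∈ S.toFinset, ψ s) • ⇑ψ := by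
  ext b
  rw [vecMul, dotProduct, ← Equiv.sum_comp (Equiv.addRight b)]
  simp [cayleyMatrix, AddChar.map_add_eq_mul, Finset.sum_mul, Finset.sum_ite,
    Set.filter_mem_univ_eq_toFinset]

open scoped Classical in
theorem spectrum_cayleyMatrix (S : Set Γ) :
    spectrum ℂ (cayleyMatrix S) = Set.range fun ψ : AddChar Γ ℂ => ∑ s ∈ S.toFinset, ψ s := by
  ext μ
  rw [spectrum.mem_iff, isUnit_iff_isUnit_det, isUnit_iff_ne_zero, not_not]
  constructor
  · intro hdet
    obtain ⟨v, hv, hμv⟩ := exists_mulVec_eq_zero_iff.mpr hdet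
    by_contra hμ
    refine hv (AddChar.eq_zero_of_forall_dotProduct_eq_zero fun ψ => ?_)
    have := congrArg (⇑ψ ⬝ᵥ ·) hμv
    rw [dotProduct_mulVec, vecMul_sub, vecMul_cayleyMatrix, Algebra.algebraMap_eq_smul_one,
      vecMul_smul, vecMul_one, ← sub_smul, smul_dotProduct, dotProduct_zero, smul_eq_zero,
      sub_eq_zero] at this
    exact this.resolve_left fun h => hμ ⟨ψ, h.symm⟩
  · rintro ⟨ψ, rfl⟩
    refine exists_vecMul_eq_zero_iff.mp ⟨ψ, AddChar.coe_ne_zero ψ, ?_⟩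
    rw [vecMul_sub, vecMul_cayleyMatrix, Algebra.algebraMap_eq_smul_one, vecMul_smul, vecMul_one,
      sub_self]

open scoped Classical in
lemma forall_sum_addChar_comp_eq_iff {f : Γ → Γ} (hf : Function.Bijective f) (S : Set Γ) :
    (∀ ψ : AddChar Γ ℂ, ∑ s ∈ S.toFinset, ψ (f s) = ∑ s ∈ S.toFinset, ψ s) ↔ f ⁻¹' S = S := by
  have (ψ : AddChar Γ ℂ) : ∑ s ∈ S.toFinset, ψ (f s) = ∑ s ∈ (f '' S).toFinset, ψ s := by
    rw [Set.toFinset_image, Finset.sum_image hf.injective.injOn]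
  simp_rw [this]
  rw [Set.preimage_eq_iff_eq_image hf, eq_comm]
  exact ⟨fun h => Set.toFinset_inj.mp (AddChar.finset_eq_of_forall_sum_eq_s17 h),
    fun h ψ => by simp_rw [h]⟩

open scoped Classical in
theorem isCoprimeSMulInvariant_iff_forall_exists_intCast_eq_sum (S : Set Γ) :
    IsCoprimeSMulInvariant S ↔ ∀ ψ : AddChar Γ ℂ, ∃ k : ℤ, ∑ s ∈ S.toFinset, ψ s = k := by
  have : NeZero (Nat.card Γ) := ⟨Nat.card_pos.ne'⟩
  have hroot (ψ : AddChar Γ ℂ) (x : Γ) : ψ x ^ Nat.card Γ = 1 := by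
    rw [← AddChar.map_nsmul_eq_pow, card_nsmul_eq_zero', AddChar.map_zero_eq_one]
  calc IsCoprimeSMulInvariant S
      ↔ ∀ m : ℕ, m.Coprime (Nat.card Γ) → ∀ ψ : AddChar Γ ℂ,
          ∑ s ∈ S.toFinset, ψ (m • s) = ∑ s ∈ S.toFinset, ψ s :=
        forall₂_congr fun m hm => by
          rw [forall_sum_addChar_comp_eq_iff hm.symm.nsmul_right_bijective, Set.ext_iff]; rfl
    _ ↔ ∀ ψ : AddChar Γ ℂ, ∀ m : ℕ, m.Coprime (Nat.card Γ) →
          ∑ s ∈ S.toFinset, ψ s ^ m = ∑ s ∈ S.toFinset, ψ s := by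
        simp_rw [AddChar.map_nsmul_eq_pow]
        exact ⟨fun h ψ m hm => h m hm ψ, fun h m hm ψ => h ψ m hm⟩
    _ ↔ _ := forall_congr' fun ψ => (exists_intCast_eq_sum_iff_forall_sum_pow_eq _ (hroot ψ)).symm

open scoped Classical in
theorem isCoprimeSMulInvariant_iff_spectrum_cayleyMatrix_int (S : Set Γ) :
    IsCoprimeSMulInvariant S ↔ ∀ μ ∈ spectrum ℂ (cayleyMatrix S), ∃ k : ℤ, μ = k := by
  rw [spectrum_cayleyMatrix, Set.forall_mem_range,
    isCoprimeSMulInvariant_iff_forall_exists_intCast_eq_sum]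

end Characters

namespace SimpleGraph

variable {V W : Type*} {G : SimpleGraph V} {G' : SimpleGraph W}

lemma Hom.edist_le (f : G →g G') (u v : V) : G'.edist (f u) (f v) ≤ G.edist u v :=
  le_iInf fun p => (G'.edist_le (p.map f)).trans_eq (by simp)

lemma Iso.edist_eq (f : G ≃g G') (u v : V) : G'.edist (f u) (f v) = G.edist u v :=
  le_antisymm (f.toHom.edist_le u v) (by simpa using f.symm.toHom.edist_le (f u) (f v))

lemma ite_reachable_dist_eq_edist (u v : V) [Decidable (G.Reachable u v)] :
    (if G.Reachable u v then (G.dist u v : ℕ∞) else ⊤) = G.edist u v := by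
  split_ifs with h
  exacts [h.coe_dist_eq_edist, (edist_eq_top_of_not_reachable h).symm]

end SimpleGraph

section CayleyGraph

variable {Γ : Type*} [AddCommGroup Γ] {S : Set Γ}

def cayleyGraph (S : Set Γ) : SimpleGraph Γ :=
  SimpleGraph.fromRel fun x y => x - y ∈ S

lemma edist_cayleyGraph_apply_eq (e : Γ ≃ Γ) (he : ∀ x y, e x - e y ∈ S ↔ x - y ∈ S) (x y : Γ) :
    (cayleyGraph S).edist (e x) (e y) = (cayleyGraph S).edist x y :=
  SimpleGraph.Iso.edist_eq ⟨e, by simp [cayleyGraph, he, e.injective.ne_iff]⟩ x y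

lemma edist_cayleyGraph_eq_edist_sub_zero (x y : Γ) :
    (cayleyGraph S).edist x y = (cayleyGraph S).edist (x - y) 0 := by
  simpa using (edist_cayleyGraph_apply_eq (Equiv.subRight y) (by simp) x y).symm

lemma IsCoprimeSMulInvariant.edist_cayleyGraph_nsmul (hS : IsCoprimeSMulInvariant S)
    {m : ℕ} (hm : m.Coprime (Nat.card Γ)) (x : Γ) :
    (cayleyGraph S).edist (m • x) 0 = (cayleyGraph S).edist x 0 := by
  simpa using edist_cayleyGraph_apply_eq (nsmulCoprime hm.symm)
    (fun x y => by simpa [← smul_sub] using hS m hm (x - y)) x 0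

end CayleyGraph

open scoped Classical in
theorem distance_power_of_integral_cayley_general {Γ : Type*} [AddCommGroup Γ] [Fintype Γ]
    (S : Set Γ)
    (hint : ∀ μ ∈ spectrum ℂ (Matrix.of fun a b : Γ => if a - b ∈ S then (1 : ℂ) else 0),
      ∃ k : ℤ, μ = (k : ℂ))
    (D : Set ℕ∞) :
    let G := SimpleGraph.fromRel (fun x y : Γ => x - y ∈ S)
    let eDist : Γ → Γ → ℕ∞ := fun x y =>
      if G.Reachable x y then (G.dist x y : ℕ∞) else ⊤
    ∃ S' : Set Γ, InB Γ S' ∧ -S' = S' ∧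
      (∀ x y : Γ, eDist x y ∈ D ↔ x - y ∈ S') ∧
      (∀ μ ∈ spectrum ℂ (Matrix.of fun x y : Γ => if eDist x y ∈ D then (1 : ℂ) else 0),
        ∃ k : ℤ, μ = (k : ℂ)) := by
  intro G eDist
  have hS : IsCoprimeSMulInvariant S :=
    (isCoprimeSMulInvariant_iff_spectrum_cayleyMatrix_int S).mpr hint
  let S' := {g : Γ | (cayleyGraph S).edist g 0 ∈ D}
  have hS' : IsCoprimeSMulInvariant S' := fun m hm x => by
    simp only [S', Set.mem_ofPred_eq, hS.edist_cayleyGraph_nsmul hm]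
  have hD (x y : Γ) : eDist x y ∈ D ↔ x - y ∈ S' := by
    rw [show eDist x y = (cayleyGraph S).edist (x - y) 0 from
      (SimpleGraph.ite_reachable_dist_eq_edist x y).trans (edist_cayleyGraph_eq_edist_sub_zero x y)]
    rfl
  refine ⟨S', hS'.inB, hS'.neg_eq, hD, ?_⟩
  have hG : Matrix.of (fun x y : Γ => if eDist x y ∈ D then (1 : ℂ) else 0) = cayleyMatrix S' := by
    ext x y
    simp only [cayleyMatrix, Matrix.of_apply, hD]
  rw [hG]
  exact (isCoprimeSMulInvariant_iff_spectrum_cayleyMatrix_int S').mp hS'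

open scoped Classical in
theorem distance_power_of_integral_cayley {Γ : Type*} [AddCommGroup Γ] [Fintype Γ]
    (S : Set Γ) (hsym : -S = S)
    (hint : ∀ μ ∈ spectrum ℂ (Matrix.of fun a b : Γ => if a - b ∈ S then (1 : ℂ) else 0),
      ∃ k : ℤ, μ = (k : ℂ))
    (D : Set ℕ∞) :
    let G := SimpleGraph.fromRel (fun x y : Γ => x - y ∈ S)
    let eDist : Γ → Γ → ℕ∞ := fun x y =>
      if G.Reachable x y then (G.dist x y : ℕ∞) else ⊤
    ∃ S' : Set Γ, InB Γ S' ∧ -S' = S' ∧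
      (∀ x y : Γ, eDist x y ∈ D ↔ x - y ∈ S') ∧
      (∀ μ ∈ spectrum ℂ (Matrix.of fun x y : Γ => if eDist x y ∈ D then (1 : ℂ) else 0),
        ∃ k : ℤ, μ = (k : ℂ)) :=
  distance_power_of_integral_cayley_general S hint D
end

section
/- For Γ = Z_{m₁} ⊕ ... ⊕ Z_{m_r}, the sumset of any two gcd-sets of Γ is again a gcd-set of Γ. -/
open Pointwise

/-- A gcd-set of `Z_{m₁} ⊕ ... ⊕ Z_{m_r}`: a union of elementary gcd-sets,
    i.e. a set closed under the relation of having the same coordinatewise gcd with `m`. -/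
def IsGcdSet {r : ℕ} (m : Fin r → ℕ) (S : Set (∀ i, ZMod (m i))) : Prop :=
  ∀ x ∈ S, ∀ y : ∀ i, ZMod (m i),
    (∀ i, Nat.gcd (y i).val (m i) = Nat.gcd (x i).val (m i)) → y ∈ S

/-- Multiplying by a unit of `ZMod n` preserves the gcd of the value with `n`. -/
lemma gcd_unit_mul {n : ℕ} [NeZero n] (u : (ZMod n)ˣ) (a : ZMod n) :
    Nat.gcd ((↑u * a : ZMod n)).val n = Nat.gcd a.val n := by
  rw [ZMod.val_mul]
  have h1 : Nat.gcd ((u : ZMod n).val * a.val % n) n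
      = Nat.gcd ((u : ZMod n).val * a.val) n := by
    rw [← Nat.gcd_rec, Nat.gcd_comm]
  rw [h1, (ZMod.val_coe_unit_coprime u).gcd_mul_left_cancel]

/-- Two elements of `ZMod n` with the same gcd with `n` differ by a unit. -/
lemma exists_unit_of_gcd_eq {n : ℕ} (hn : 0 < n) (a b : ZMod n)
    (h : Nat.gcd b.val n = Nat.gcd a.val n) : ∃ u : (ZMod n)ˣ, b = ↑u * a := by
  haveI : NeZero n := ⟨hn.ne'⟩
  set d := Nat.gcd a.val n with hd
  have hdn : d ∣ n := Nat.gcd_dvd_right _ _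
  have hd0 : 0 < d := Nat.gcd_pos_of_pos_right _ hn
  obtain ⟨k, hk⟩ := hdn
  have hk0 : 0 < k := by
    rcases Nat.eq_zero_or_pos k with rfl | hk0
    · rw [hk] at hn; simp at hn
    · exact hk0
  haveI : NeZero k := ⟨hk0.ne'⟩
  obtain ⟨a₁, ha₁⟩ : d ∣ a.val := Nat.gcd_dvd_left _ _
  obtain ⟨b₁, hb₁⟩ : d ∣ b.val := h ▸ Nat.gcd_dvd_left b.val n
  have hca : Nat.Coprime a₁ k := by
    have : d * Nat.gcd a₁ k = d * 1 := by
      rw [← Nat.gcd_mul_left, ← ha₁, ← hk, mul_one, ← hd]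
    exact Nat.eq_of_mul_eq_mul_left hd0 this
  have hcb : Nat.Coprime b₁ k := by
    have : d * Nat.gcd b₁ k = d * 1 := by
      rw [← Nat.gcd_mul_left, ← hb₁, ← hk, mul_one, h]
    exact Nat.eq_of_mul_eq_mul_left hd0 this
  have hkn : k ∣ n := ⟨d, by rw [hk, mul_comm]⟩
  obtain ⟨u, hu⟩ := ZMod.unitsMap_surjective hkn
    (ZMod.unitOfCoprime b₁ hcb * (ZMod.unitOfCoprime a₁ hca)⁻¹)
  refine ⟨u, ?_⟩
  set c := (u : ZMod n).val with hc
  have hcast : ((c : ZMod k)) * ((a₁ : ℕ) : ZMod k) = ((b₁ : ℕ) : ZMod k) := by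
    have := congrArg (fun v : (ZMod k)ˣ => (v * ZMod.unitOfCoprime a₁ hca : (ZMod k)ˣ)) hu
    simp only [inv_mul_cancel_right] at this
    have := congrArg (fun v : (ZMod k)ˣ => (v : ZMod k)) this
    simp only [Units.val_mul] at this
    rw [ZMod.unitsMap_def] at this
    simp only [Units.coe_map, MonoidHom.coe_coe, ZMod.castHom_apply] at this
    simp only [ZMod.coe_unitOfCoprime] at this
    rwa [← ZMod.natCast_val] at this
  have hmod : c * a₁ ≡ b₁ [MOD k] := by
    rw [← ZMod.natCast_eq_natCast_iff, Nat.cast_mul]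
    exact hcast
  have hmod2 : c * a.val ≡ b.val [MOD n] := by
    have := hmod.mul_left' (c := d)
    rw [← hk] at this
    calc c * a.val = d * (c * a₁) := by rw [ha₁]; ring
    _ ≡ d * b₁ [MOD n] := this
    _ = b.val := hb₁.symm
  have : ((c * a.val : ℕ) : ZMod n) = ((b.val : ℕ) : ZMod n) :=
    (ZMod.natCast_eq_natCast_iff _ _ _).mpr hmod2
  rw [Nat.cast_mul] at this
  simp only [hc, ZMod.natCast_val, ZMod.cast_id] at this
  exact this.symm

theorem sumset_of_gcd_sets_is_gcd_set {r : ℕ} (m : Fin r → ℕ) (hm : ∀ i, 0 < m i)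
    (S T : Set (∀ i, ZMod (m i))) (hS : IsGcdSet m S) (hT : IsGcdSet m T) :
    IsGcdSet m (S + T) := by
  intro z hz w hw
  obtain ⟨x, hx, y, hy, hxy⟩ := hz
  have hu : ∀ i, ∃ u : (ZMod (m i))ˣ, w i = ↑u * (x i + y i) := fun i => by
    refine exists_unit_of_gcd_eq (hm i) _ _ ?_
    have : x i + y i = z i := by rw [← hxy]; rfl
    rw [this]; exact hw i
  choose u hu using hu
  have hx' : (fun i => ↑(u i) * x i) ∈ S :=
    hS x hx _ (fun i => @gcd_unit_mul (m i) ⟨(hm i).ne'⟩ (u i) (x i))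
  have hy' : (fun i => ↑(u i) * y i) ∈ T :=
    hT y hy _ (fun i => @gcd_unit_mul (m i) ⟨(hm i).ne'⟩ (u i) (y i))
  have : w = (fun i => ↑(u i) * x i) + (fun i => ↑(u i) * y i) := by
    funext i
    show w i = ↑(u i) * x i + ↑(u i) * y i
    rw [hu i, mul_add]
  rw [this]
  exact Set.add_mem_add hx' hy'
end
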